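/- Let (f, ξ, Γ, h, S) be an equiaffine immersion datum on U with conormal map ν, and assume in addition that at every x ∈ U the form h(x) is symmetric and S(x) is h(x)-self-adjoint, i.e. h(x)(S(x)(X))(Y) = h(x)(X)(S(x)(Y)) for all X, Y ∈ ℝⁿ. Then the map σ := (ξ, ν) is φ-anti-invariant in the sense that ω̂(σ⋆(x)(X), σ⋆(x)(Y)) = 0 for all x ∈ U and X, Y ∈ ℝⁿ, where σ⋆(x)(X) := (Dξ(x)(X), Dν(x)(X)). -/

import Mathlib

open Matrix

/-- The symplectic form `ω̂((v,φ),(w,ψ)) = (φ(w) − ψ(v))/2` on `ℝ^{n+1} × (ℝ^{n+1})*`. -/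
noncomputable def omegahat (n : ℕ)
    (p q : (Fin (n + 1) → ℝ) × ((Fin (n + 1) → ℝ) →L[ℝ] ℝ)) : ℝ :=
  (p.2 q.1 - q.2 p.1) / 2

/-- If, in addition, `h x` is symmetric and `S x` is `h x`-self-adjoint at
every point of `U`, then `σ = (ξ, ν)` is `φ`-anti-invariant: the pairing `ω̂` vanishes on
the image of its differential. -/
theorem stmt_2 (n : ℕ) (hn : 1 ≤ n) (U : Set (Fin n → ℝ)) (hU : IsOpen U)
    (f ξ : (Fin n → ℝ) → (Fin (n + 1) → ℝ))
    (Γ : (Fin n → ℝ) → (Fin n → ℝ) →L[ℝ] (Fin n → ℝ) →L[ℝ] (Fin n → ℝ))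
    (h : (Fin n → ℝ) → (Fin n → ℝ) →L[ℝ] (Fin n → ℝ) →L[ℝ] ℝ)
    (S : (Fin n → ℝ) → (Fin n → ℝ) →L[ℝ] (Fin n → ℝ))
    (ν : (Fin n → ℝ) → (Fin (n + 1) → ℝ) →L[ℝ] ℝ)
    (hf : ContDiffOn ℝ (⊤ : ℕ∞) f U) (hξ : ContDiffOn ℝ (⊤ : ℕ∞) ξ U)
    (hΓ : ContDiffOn ℝ (⊤ : ℕ∞) Γ U) (hh : ContDiffOn ℝ (⊤ : ℕ∞) h U)
    (hS : ContDiffOn ℝ (⊤ : ℕ∞) S U) (hν : ContDiffOn ℝ (⊤ : ℕ∞) ν U)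
    (SE1 : ∀ x ∈ U, ∀ X Y : Fin n → ℝ,
      fderiv ℝ (fun z => fderiv ℝ f z Y) x X
        = fderiv ℝ f x (Γ x X Y) + h x X Y • ξ x)
    (SE2 : ∀ x ∈ U, ∀ X : Fin n → ℝ, fderiv ℝ ξ x X = - fderiv ℝ f x (S x X))
    (hν1 : ∀ x ∈ U, ν x (ξ x) = 1)
    (hν2 : ∀ x ∈ U, ∀ Z : Fin n → ℝ, ν x (fderiv ℝ f x Z) = 0)
    -- h is symmetric
    (hsymm : ∀ x ∈ U, ∀ X Y : Fin n → ℝ, h x X Y = h x Y X)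
    -- S is h-self-adjoint
    (hsa : ∀ x ∈ U, ∀ X Y : Fin n → ℝ, h x (S x X) Y = h x X (S x Y)) :
    ∀ x ∈ U, ∀ X Y : Fin n → ℝ,
      omegahat n (fderiv ℝ ξ x X, fderiv ℝ ν x X) (fderiv ℝ ξ x Y, fderiv ℝ ν x Y) = 0 := by

  intro x hx X Y
  have hxU : U ∈ nhds x := hU.mem_nhds hx
  -- differentiability facts
  have hνd : DifferentiableAt ℝ ν x := (hν.differentiableOn (by simp)).differentiableAt hxU
  have hf' : ContDiffOn ℝ (⊤ : ℕ∞) (fderiv ℝ f) U := hf.fderiv_of_isOpen hU (by simp)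
  -- key lemma: Dν(x)(X)(Df(x)(Y)) = - h x X Y
  have key : ∀ W Z : Fin n → ℝ, fderiv ℝ ν x W (fderiv ℝ f x Z) = - h x W Z := by
    intro W Z
    have hFd : DifferentiableAt ℝ (fun z => fderiv ℝ f z Z) x := by
      have : ContDiffOn ℝ (⊤ : ℕ∞) (fun z => fderiv ℝ f z Z) U :=
        (ContinuousLinearMap.apply ℝ (Fin (n+1) → ℝ) Z).contDiff.comp_contDiffOn hf'
      exact (this.differentiableOn (by simp)).differentiableAt hxU
    have hg0 : (fun z => ν z (fderiv ℝ f z Z)) =ᶠ[nhds x] fun _ => (0 : ℝ) := by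
      filter_upwards [hxU] with z hz using hν2 z hz Z
    have hgd : fderiv ℝ (fun z => ν z (fderiv ℝ f z Z)) x = 0 := by
      rw [hg0.fderiv_eq, fderiv_fun_const]; rfl
    have hclm := fderiv_clm_apply hνd hFd
    have := congrArg (fun (L : (Fin n → ℝ) →L[ℝ] ℝ) => L W) (hgd ▸ hclm)
    simp only [ContinuousLinearMap.add_apply, ContinuousLinearMap.coe_comp',
      Function.comp_apply, ContinuousLinearMap.flip_apply,
      ContinuousLinearMap.zero_apply] at this
    rw [SE1 x hx W Z] at this
    simp only [map_add, _root_.map_smul, hν2 x hx, hν1 x hx, smul_eq_mul, mul_one, zero_add] at this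
    linarith
  have e1 : fderiv ℝ ν x X (fderiv ℝ ξ x Y) = h x X (S x Y) := by
    rw [SE2 x hx Y, map_neg, key X (S x Y)]; ring
  have e2 : fderiv ℝ ν x Y (fderiv ℝ ξ x X) = h x Y (S x X) := by
    rw [SE2 x hx X, map_neg, key Y (S x X)]; ring
  have e3 : h x X (S x Y) = h x Y (S x X) := by
    rw [← hsa x hx X Y, hsymm x hx (S x X) Y]
  simp only [omegahat, e1, e2, e3, sub_self, zero_div]
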